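/- arXiv:0905.4150 — 2 statements merged into one kernel-verified Lean document; each statement's English description precedes it below -/
import Mathlib

section
/- Let f = y₅⁴ − y₀y₁y₂(y₀+y₁+y₂+y₃+y₄) and g = 2y₅² − (y₀y₁+y₀y₂+y₁y₂−y₃y₄) in ℂ[y₀,…,y₅]. Suppose y = (y₀,…,y₅) ∈ ℂ⁶, y ≠ 0, satisfies either (i) y₀+y₄ = 0, y₁+y₄ = 0, y₃−y₄ = 0 and y₂y₄+y₅² = 0, or (ii) y₀ = y₂ = y₃ = y₅ = 0. Then f(y) = g(y) = 0 and the 2×6 Jacobian matrix whose rows are the gradients of f and g at y has rank strictly less than 2. In particular the corresponding points of the projective variety X = {f = g = 0} ⊂ ℙ⁵(ℂ) are singular points of X. -/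
open MvPolynomial

/-- The quartic `f = y₅⁴ − y₀y₁y₂(y₀+y₁+y₂+y₃+y₄)`. -/
noncomputable def fpoly : MvPolynomial (Fin 6) ℂ :=
  X 5 ^ 4 - X 0 * X 1 * X 2 * (X 0 + X 1 + X 2 + X 3 + X 4)

/-- The quadric `g = 2y₅² − (y₀y₁+y₀y₂+y₁y₂−y₃y₄)`. -/
noncomputable def gpoly : MvPolynomial (Fin 6) ℂ :=
  2 * X 5 ^ 2 - (X 0 * X 1 + X 0 * X 2 + X 1 * X 2 - X 3 * X 4)

/-- The 2×6 Jacobian matrix of `(f, g)` evaluated at `y`: its rows are the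
gradients of `f` and `g`. -/
noncomputable def jacobianFG (y : Fin 6 → ℂ) : Matrix (Fin 2) (Fin 6) ℂ :=
  Matrix.of fun i j => eval y (pderiv j (if i = 0 then fpoly else gpoly))

/-!
On the conic `y₀ = y₁ = -y₄, y₃ = y₄, y₅² = -y₂y₄` the gradient of `f` is `y₅²` times the gradient
of `g`, and on the line `y₀ = y₂ = y₃ = y₅ = 0` the gradient of `f` vanishes; in both cases the
two rows of the Jacobian matrix are linearly dependent.
-/

theorem Matrix.rank_lt_two_of_row_zero_eq_smul {R n : Type*} [CommSemiring R]
    [StrongRankCondition R] [Fintype n] (M : Matrix (Fin 2) n R) (c : R) (h : M 0 = c • M 1) :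
    M.rank < 2 := by
  have hM : M = Matrix.vecMulVec ![c, 1] (M 1) := by
    ext i j
    fin_cases i <;> simp [Matrix.vecMulVec_apply, h]
  rw [hM]
  exact (Matrix.rank_vecMulVec_le _ _).trans_lt one_lt_two

section Evaluation

variable (y : Fin 6 → ℂ)

theorem eval_fpoly :
    eval y fpoly = y 5 ^ 4 - y 0 * y 1 * y 2 * (y 0 + y 1 + y 2 + y 3 + y 4) := by
  simp [fpoly]

theorem eval_gpoly :
    eval y gpoly = 2 * y 5 ^ 2 - (y 0 * y 1 + y 0 * y 2 + y 1 * y 2 - y 3 * y 4) := by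
  simp [gpoly]

theorem jacobianFG_zero :
    jacobianFG y 0 =
      let s := y 0 + y 1 + y 2 + y 3 + y 4
      let p := y 0 * y 1 * y 2
      ![-(y 1 * y 2 * s + p), -(y 0 * y 2 * s + p), -(y 0 * y 1 * s + p), -p, -p, 4 * y 5 ^ 3] := by
  ext j
  fin_cases j <;> simp [jacobianFG, fpoly] <;> ring

theorem jacobianFG_one :
    jacobianFG y 1 = ![-(y 1 + y 2), -(y 0 + y 2), -(y 0 + y 1), y 4, y 3, 4 * y 5] := by
  have hC (k : Fin 6) : pderiv k (2 : MvPolynomial (Fin 6) ℂ) = 0 := by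
    rw [← map_ofNat C 2, pderiv_C]
  ext j
  fin_cases j <;> simp [jacobianFG, gpoly, hC]; ring

end Evaluation

theorem singular_of_conic (y : Fin 6 → ℂ)
    (h : y 0 + y 4 = 0 ∧ y 1 + y 4 = 0 ∧ y 3 - y 4 = 0 ∧ y 2 * y 4 + y 5 ^ 2 = 0) :
    eval y fpoly = 0 ∧ eval y gpoly = 0 ∧ (jacobianFG y).rank < 2 := by
  obtain ⟨h0, h1, h3, h5⟩ := h
  obtain ⟨e0, e1, e3⟩ : y 0 = -y 4 ∧ y 1 = -y 4 ∧ y 3 = y 4 :=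
    ⟨eq_neg_of_add_eq_zero_left h0, eq_neg_of_add_eq_zero_left h1, sub_eq_zero.mp h3⟩
  refine ⟨?_, ?_, (jacobianFG y).rank_lt_two_of_row_zero_eq_smul (y 5 ^ 2) ?_⟩
  · rw [eval_fpoly, e0, e1, e3]
    linear_combination (y 5 ^ 2 - y 2 * y 4) * h5
  · rw [eval_gpoly, e0, e1, e3]
    linear_combination 2 * h5
  · rw [jacobianFG_zero, jacobianFG_one, e0, e1, e3]
    ext j
    fin_cases j <;> simp
    · linear_combination (y 2 - y 4) * h5
    · linear_combination (y 2 - y 4) * h5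
    · linear_combination (-2 * y 4) * h5
    · linear_combination (-y 4) * h5
    · linear_combination (-y 4) * h5
    · ring

theorem singular_of_line (y : Fin 6 → ℂ) (h : y 0 = 0 ∧ y 2 = 0 ∧ y 3 = 0 ∧ y 5 = 0) :
    eval y fpoly = 0 ∧ eval y gpoly = 0 ∧ (jacobianFG y).rank < 2 := by
  obtain ⟨h0, h2, h3, h5⟩ := h
  refine ⟨?_, ?_, (jacobianFG y).rank_lt_two_of_row_zero_eq_smul 0 ?_⟩
  · simp [eval_fpoly, h0, h2, h5]
  · simp [eval_gpoly, h0, h2, h3, h5]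
  · rw [jacobianFG_zero, zero_smul]
    simp [h0, h2, h5]

theorem stmt_1_general (y : Fin 6 → ℂ)
    (h : (y 0 + y 4 = 0 ∧ y 1 + y 4 = 0 ∧ y 3 - y 4 = 0 ∧ y 2 * y 4 + y 5 ^ 2 = 0) ∨
         (y 0 = 0 ∧ y 2 = 0 ∧ y 3 = 0 ∧ y 5 = 0)) :
    eval y fpoly = 0 ∧ eval y gpoly = 0 ∧ (jacobianFG y).rank < 2 :=
  h.elim (singular_of_conic y) (singular_of_line y)

/-- A nonzero point of `ℂ⁶` lying on either of the two listed loci satisfies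
`f = g = 0` and the Jacobian matrix of `(f,g)` there has rank `< 2`; hence the
corresponding point of `X = {f = g = 0} ⊂ ℙ⁵(ℂ)` is singular. -/
theorem stmt_1 (y : Fin 6 → ℂ) (hy : y ≠ 0)
    (h : (y 0 + y 4 = 0 ∧ y 1 + y 4 = 0 ∧ y 3 - y 4 = 0 ∧ y 2 * y 4 + y 5 ^ 2 = 0) ∨
         (y 0 = 0 ∧ y 2 = 0 ∧ y 3 = 0 ∧ y 5 = 0)) :
    eval y fpoly = 0 ∧ eval y gpoly = 0 ∧ (jacobianFG y).rank < 2 :=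
  stmt_1_general y h
end

section
/- On the open set {(g₁,g₂,g₃) ∈ ℂ³ : g₁g₂g₃ ≠ 0} define G₁ = g₁g₂/g₃ + g₃/(g₁g₂), G₂ = g₁g₃/g₂ + g₂/(g₁g₃), G₃ = g₂g₃/g₁ + g₁/(g₂g₃). Then the Jacobian determinant det(∂Gᵢ/∂gⱼ)_{1≤i,j≤3} equals 4·(g₃²−g₁²g₂²)(g₂²−g₁²g₃²)(g₁²−g₂²g₃²) / (g₁⁴g₂⁴g₃⁴) at every point with g₁g₂g₃ ≠ 0. -/
/-- The partial derivative `∂f/∂gⱼ` of `f : ℂ³ → ℂ` at the point `p`. -/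
noncomputable def pderivAt (f : (Fin 3 → ℂ) → ℂ) (j : Fin 3) (p : Fin 3 → ℂ) : ℂ :=
  deriv (fun t => f (Function.update p j t)) (p j)

/-- The three functions `G₁ = g₁g₂/g₃ + g₃/(g₁g₂)`, `G₂ = g₁g₃/g₂ + g₂/(g₁g₃)`,
`G₃ = g₂g₃/g₁ + g₁/(g₂g₃)` (with `p 0 = g₁`, `p 1 = g₂`, `p 2 = g₃`). -/
noncomputable def Gfun : Fin 3 → (Fin 3 → ℂ) → ℂ :=
  ![fun p => p 0 * p 1 / p 2 + p 2 / (p 0 * p 1),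
    fun p => p 0 * p 2 / p 1 + p 1 / (p 0 * p 2),
    fun p => p 1 * p 2 / p 0 + p 0 / (p 1 * p 2)]

/-!
Each `Gᵢ` is `u + u⁻¹` evaluated at a Laurent monomial `uᵢ = ∏ₖ gₖ ^ eᵢₖ`. Since
`gⱼ ∂uᵢ/∂gⱼ = eᵢⱼ uᵢ`, the Jacobian factors as `diag((1 - uᵢ⁻²) uᵢ) · E · diag(gⱼ⁻¹)`, so its
determinant is `det E · ∏ᵢ (uᵢ - uᵢ⁻¹) / (g₁g₂g₃)`, and the exponent matrix `E` has determinant `-4`.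
-/

open Finset Function Matrix

section LaurentMonomial

variable {ι M 𝕜 : Type*} [Fintype ι] [DecidableEq ι]

def laurentMonomial [CommGroupWithZero M] (e : ι → ℤ) (p : ι → M) : M :=
  ∏ k, p k ^ e k

lemma laurentMonomial_update [CommGroupWithZero M] (e : ι → ℤ) (p : ι → M) (j : ι) (t : M) :
    laurentMonomial e (update p j t) = t ^ e j * ∏ k ∈ univ \ {j}, p k ^ e k := by
  simp only [laurentMonomial, apply_update (fun k (x : M) => x ^ e k)]
  exact prod_update_of_mem (mem_univ j) _ _

variable [NontriviallyNormedField 𝕜]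

lemma hasDerivAt_laurentMonomial_update (e : ι → ℤ) {p : ι → 𝕜} {j : ι} (hj : p j ≠ 0) :
    HasDerivAt (fun t => laurentMonomial e (update p j t))
      (e j * laurentMonomial e p / p j) (p j) := by
  have hsplit : laurentMonomial e p = p j ^ e j * ∏ k ∈ univ \ {j}, p k ^ e k := by
    simpa using laurentMonomial_update e p j (p j)
  simp only [laurentMonomial_update]
  refine ((hasDerivAt_zpow (e j) (p j) (.inl hj)).mul_const _).congr_deriv ?_
  rw [hsplit, zpow_sub_one₀ hj]
  ring

lemma deriv_comp_laurentMonomial_update (f : 𝕜 → 𝕜) (e : ι → ℤ) {p : ι → 𝕜} {j : ι}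
    (hj : p j ≠ 0) (hf : DifferentiableAt 𝕜 f (laurentMonomial e p)) :
    deriv (fun t => f (laurentMonomial e (update p j t))) (p j) =
      deriv f (laurentMonomial e p) * laurentMonomial e p * e j * (p j)⁻¹ := by
  refine (hf.hasDerivAt.comp_of_eq (p j) (hasDerivAt_laurentMonomial_update e hj)
    (by rw [update_eq_self])).deriv.trans ?_
  ring

theorem det_jacobian_comp_laurentMonomial (f : 𝕜 → 𝕜) (E : ι → ι → ℤ) {p : ι → 𝕜}
    (hp : ∀ k, p k ≠ 0) (hf : ∀ i, DifferentiableAt 𝕜 f (laurentMonomial (E i) p)) :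
    (of fun i j => deriv (fun t => f (laurentMonomial (E i) (update p j t))) (p j)).det =
      (∏ i, deriv f (laurentMonomial (E i) p) * laurentMonomial (E i) p) *
        (of fun i j => (E i j : 𝕜)).det / ∏ j, p j := by
  have hfactor : (of fun i j => deriv (fun t => f (laurentMonomial (E i) (update p j t))) (p j)) =
      diagonal (fun i => deriv f (laurentMonomial (E i) p) * laurentMonomial (E i) p) *
        of (fun i j => (E i j : 𝕜)) * diagonal (fun j => (p j)⁻¹) := by
    ext i j
    rw [mul_diagonal, diagonal_mul, of_apply, of_apply,
      deriv_comp_laurentMonomial_update f _ (hp j) (hf i)]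
  rw [hfactor, det_mul, det_mul, det_diagonal, det_diagonal, prod_inv_distrib, div_eq_mul_inv]

lemma deriv_add_inv {u : 𝕜} (hu : u ≠ 0) : deriv (fun u : 𝕜 => u + u⁻¹) u = 1 - (u ^ 2)⁻¹ :=
  ((hasDerivAt_id' u).add (hasDerivAt_inv hu)).deriv.trans (sub_eq_add_neg _ _).symm

end LaurentMonomial

def gfunExponents : Fin 3 → Fin 3 → ℤ :=
  ![![1, 1, -1], ![1, -1, 1], ![-1, 1, 1]]

lemma Gfun_eq_laurentMonomial (i : Fin 3) :
    Gfun i = fun p =>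
      laurentMonomial (gfunExponents i) p + (laurentMonomial (gfunExponents i) p)⁻¹ := by
  funext p
  fin_cases i <;>
    simp [Gfun, gfunExponents, laurentMonomial, Fin.prod_univ_three, div_eq_mul_inv] <;>
    ring

lemma det_gfunExponents : (of fun i j => (gfunExponents i j : ℂ)).det = -4 := by
  simp [gfunExponents, det_fin_three]
  norm_num

/-- At every point with `g₁g₂g₃ ≠ 0`, the Jacobian determinant `det(∂Gᵢ/∂gⱼ)` equals
`4(g₃²−g₁²g₂²)(g₂²−g₁²g₃²)(g₁²−g₂²g₃²)/(g₁⁴g₂⁴g₃⁴)`. -/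
theorem stmt_17 (p : Fin 3 → ℂ) (hp : p 0 * p 1 * p 2 ≠ 0) :
    (Matrix.of fun i j : Fin 3 => pderivAt (Gfun i) j p).det =
      4 * ((p 2 ^ 2 - p 0 ^ 2 * p 1 ^ 2) * (p 1 ^ 2 - p 0 ^ 2 * p 2 ^ 2) *
            (p 0 ^ 2 - p 1 ^ 2 * p 2 ^ 2)) /
        (p 0 ^ 4 * p 1 ^ 4 * p 2 ^ 4) := by
  have hpk : ∀ k, p k ≠ 0 := by
    simp only [mul_ne_zero_iff] at hp
    intro k
    fin_cases k <;> simp [hp]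
  have hu : ∀ i, laurentMonomial (gfunExponents i) p ≠ 0 := fun i =>
    prod_ne_zero_iff.mpr fun k _ => zpow_ne_zero _ (hpk k)
  have hjac := det_jacobian_comp_laurentMonomial (fun u : ℂ => u + u⁻¹) gfunExponents hpk
    fun i => by fun_prop (disch := exact hu i)
  simp only [pderivAt, Gfun_eq_laurentMonomial]
  rw [hjac, det_gfunExponents, Fin.prod_univ_three, Fin.prod_univ_three, deriv_add_inv (hu 0),
    deriv_add_inv (hu 1), deriv_add_inv (hu 2)]
  simp only [laurentMonomial, gfunExponents, Fin.prod_univ_three, cons_val', cons_val_fin_one,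
    cons_val_zero, cons_val_one, Matrix.cons_val, zpow_ofNat, pow_one, _root_.zpow_neg]
  field_simp [hpk 0, hpk 1, hpk 2]
  ring
end
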